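/- arXiv:1801.09090 — 4 statements merged into one kernel-verified Lean document; each statement's English description precedes it below -/
import Mathlib

section
/- Let λ be a partition and let z be a complex number with Re z > 0. Then the series Σ_{i=1}^∞ e^{z(λ_i − i + 1/2)} converges absolutely and Σ_{s∈λ} e^{z·c(s)} = (1/ς(z)) · ( Σ_{i=1}^∞ e^{z(λ_i − i + 1/2)} − 1/ς(z) ), where ς(z) = e^{z/2} − e^{−z/2}. -/
/-!
Row `i` of the diagram contributes the geometric sum `Σ_{j < λ_i} e^{z(j - i)}`, which equals
`ς(z)⁻¹ (e^{z(λ_i - i + 1/2)} - e^{z(-i + 1/2)})` (1-indexed). Summing over all rows, the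
second terms form the geometric series `Σ_i e^{z(-i + 1/2)} = 1/ς(z)`, and the first terms agree
with them for all but finitely many `i`, so both series converge.
-/

open Complex Finset Filter

local notation "ς " z:max => Complex.exp (z / 2) - Complex.exp (-z / 2)

namespace Complex

theorem exp_half_sub_exp_neg_half_eq_mul (z : ℂ) : (ς z) = exp (-z / 2) * (exp z - 1) := by
  rw [mul_sub, mul_one, ← exp_add]
  ring_nf

theorem exp_ne_one_of_re_pos {z : ℂ} (hz : 0 < z.re) : exp z ≠ 1 := by
  intro h
  have := congrArg (‖·‖) h
  simp only [norm_exp, norm_one, Real.exp_eq_one_iff] at this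
  exact hz.ne' this

theorem norm_exp_neg_lt_one {z : ℂ} (hz : 0 < z.re) : ‖exp (-z)‖ < 1 := by
  rw [norm_exp, neg_re, Real.exp_lt_one_iff]
  linarith

theorem sum_range_exp_mul_sub {z : ℂ} (hz : exp z ≠ 1) (a : ℂ) (m : ℕ) :
    ∑ j ∈ range m, exp (z * (j - a)) =
      (ς z)⁻¹ * (exp (z * (m - a - 1 / 2)) - exp (z * (-a - 1 / 2))) := by
  have hterm (j : ℕ) : exp (z * (j - a)) = exp z ^ j * exp (-z * a) := by
    rw [← exp_nat_mul, ← exp_add]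
    ring_nf
  have hshift (w : ℂ) : exp (z * (w - 1 / 2)) = exp (z * w) * exp (-z / 2) := by
    rw [← exp_add]
    ring_nf
  have hz1 : exp z - 1 ≠ 0 := sub_ne_zero.mpr hz
  simp only [hterm, ← sum_mul, geom_sum_eq hz, hshift, exp_half_sub_exp_neg_half_eq_mul]
  field_simp

theorem hasSum_exp_mul_neg_sub_half {z : ℂ} (hz : 0 < z.re) :
    HasSum (fun i : ℕ => exp (z * (-i - 1 / 2))) (ς z)⁻¹ := by
  have hterm (i : ℕ) : exp (z * (-i - 1 / 2)) = exp (-z / 2) * exp (-z) ^ i := by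
    rw [← exp_nat_mul, ← exp_add]
    ring_nf
  have hς : (ς z)⁻¹ = exp (-z / 2) * (1 - exp (-z))⁻¹ := by
    have : (ς z) = exp (z / 2) * (1 - exp (-z)) := by
      rw [mul_sub, mul_one, ← exp_add]
      ring_nf
    rw [this, mul_inv, ← exp_neg, neg_div]
  simp only [hterm, hς]
  exact (hasSum_geometric_of_norm_lt_one (norm_exp_neg_lt_one hz)).mul_left _

end Complex

theorem stmt_1_general (μ : ℕ → ℕ) (hfin : ∃ N, ∀ i, N ≤ i → μ i = 0)
    (z : ℂ) (hz : 0 < z.re) :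
    Summable (fun i : ℕ => ‖Complex.exp (z * ((μ i : ℂ) - (i : ℂ) - 1 / 2))‖) ∧
      ∑' i : ℕ, ∑ j ∈ Finset.range (μ i), Complex.exp (z * ((j : ℂ) - (i : ℂ))) =
        (Complex.exp (z / 2) - Complex.exp (-z / 2))⁻¹ *
          ((∑' i : ℕ, Complex.exp (z * ((μ i : ℂ) - (i : ℂ) - 1 / 2))) -
            (Complex.exp (z / 2) - Complex.exp (-z / 2))⁻¹) := by
  obtain ⟨N, hN⟩ := hfin
  have hempty := hasSum_exp_mul_neg_sub_half hz
  have hrows : Summable fun i : ℕ => exp (z * (μ i - i - 1 / 2)) := by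
    refine hempty.summable.congr_cofinite ?_
    rw [Nat.cofinite_eq_atTop, EventuallyEq, eventually_atTop]
    exact ⟨N, fun i hi => by simp [hN i hi, neg_sub_left]⟩
  refine ⟨summable_norm_iff.mpr hrows, ?_⟩
  simp_rw [sum_range_exp_mul_sub (exp_ne_one_of_re_pos hz), tsum_mul_left]
  rw [hrows.tsum_sub hempty.summable, hempty.tsum_eq]

/-- For a partition `μ` (antitone `ℕ → ℕ`, zero-indexed, with
finitely many nonzero parts) and `z : ℂ` with `Re z > 0`, the series
`Σ_{i=1}^∞ e^{z(μ_i - i + 1/2)}` converges absolutely, and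
`Σ_{s ∈ μ} e^{z c(s)} = ς(z)⁻¹ (Σ_{i=1}^∞ e^{z(μ_i - i + 1/2)} - ς(z)⁻¹)`
where `ς(z) = e^{z/2} - e^{-z/2}`.  Boxes of row `i` (0-indexed) are `(i,j)` with
`j < μ i`, of content `j - i`; `λ_i - i + 1/2` in the 1-indexed convention becomes
`μ i - i - 1/2` in the 0-indexed one. -/
theorem stmt_1 (μ : ℕ → ℕ) (hμ : Antitone μ) (hfin : ∃ N, ∀ i, N ≤ i → μ i = 0)
    (z : ℂ) (hz : 0 < z.re) :
    Summable (fun i : ℕ => ‖Complex.exp (z * ((μ i : ℂ) - (i : ℂ) - 1 / 2))‖) ∧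
      ∑' i : ℕ, ∑ j ∈ Finset.range (μ i), Complex.exp (z * ((j : ℂ) - (i : ℂ))) =
        (Complex.exp (z / 2) - Complex.exp (-z / 2))⁻¹ *
          ((∑' i : ℕ, Complex.exp (z * ((μ i : ℂ) - (i : ℂ) - 1 / 2))) -
            (Complex.exp (z / 2) - Complex.exp (-z / 2))⁻¹) :=
  stmt_1_general μ hfin z hz
end

section
/- Let λ be a partition with Frobenius coordinates (a_1,…,a_r | b_1,…,b_r). Then for every complex number z, (e^{z/2} − e^{−z/2}) · Σ_{s∈λ} e^{z·c(s)} = Σ_{j=1}^{r} ( e^{z(a_j + 1/2)} − e^{−z(b_j + 1/2)} ). -/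
/-!
Cut the Young diagram into the hooks of its diagonal boxes: the box `(i, j)` lies in the hook of
`(d, d)` with `d = min i j`, and exactly the first `r` diagonal boxes lie in the diagram. Along
the arm of the `d`-th hook the contents run through `0, …, μ d - 1 - d`, along its leg through
`-1, …, d + 1 - μ' d`, so multiplying by `e^{z/2} - e^{-z/2}` telescopes the arm to
`e^{z(a_d + 1/2)} - e^{-z/2}` and the leg to `e^{-z/2} - e^{-z(b_d + 1/2)}`.
-/

/-- The Frobenius rank of a partition `μ` (0-indexed): `r = #{i : λ_i ≥ i}` in the
1-indexed convention, i.e. the number of indices `i` with `i < μ i`. -/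
noncomputable def frobeniusRank (μ : ℕ → ℕ) : ℕ := Nat.card {i : ℕ | i < μ i}

/-- The `j`-th part (0-indexed) of the conjugate partition of `μ`:
`μ' j = #{i : μ i > j}`, so that in the 1-indexed convention `λ'_j = μ' (j-1)`. -/
noncomputable def conjugatePart (μ : ℕ → ℕ) (j : ℕ) : ℕ := Nat.card {i : ℕ | j < μ i}

open Finset

lemma IsLowerSet.lt_natCard_iff {S : Set ℕ} (hS : IsLowerSet S) (hfin : S.Finite) {i : ℕ} :
    i < Nat.card S ↔ i ∈ S := by
  obtain hS | ⟨n, rfl⟩ := hS.eq_univ_or_Iio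
  · exact absurd (hS ▸ hfin) Set.infinite_univ
  · rw [Nat.card_coe_set_eq, Set.ncard_Iio_nat, Set.mem_Iio]

section Partition

variable {μ : ℕ → ℕ} {N : ℕ}

lemma finite_setOf_lt_apply (hN : ∀ i, N ≤ i → μ i = 0) (j : ℕ) : {i | j < μ i}.Finite :=
  (Set.finite_Iio N).subset fun i hi => by
    by_contra h
    simp_all [hN i (not_lt.mp h)]

lemma lt_conjugatePart_iff (hμ : Antitone μ) (hN : ∀ i, N ≤ i → μ i = 0) (i j : ℕ) :
    i < conjugatePart μ j ↔ j < μ i :=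
  IsLowerSet.lt_natCard_iff (fun _ _ hab hb => lt_of_lt_of_le hb (hμ hab))
    (finite_setOf_lt_apply hN j)

lemma lt_frobeniusRank_iff (hμ : Antitone μ) (hN : ∀ i, N ≤ i → μ i = 0) (i : ℕ) :
    i < frobeniusRank μ ↔ i < μ i :=
  IsLowerSet.lt_natCard_iff (fun _ _ hab hb => (hab.trans_lt hb).trans_le (hμ hab))
    ((finite_setOf_lt_apply hN 0).subset fun _ hi => Nat.zero_lt_of_lt hi)

variable {M : Type*} [AddCommMonoid M]

lemma sum_row_tails_eq_sum_hook_arms (hμ : Antitone μ) (hN : ∀ i, N ≤ i → μ i = 0) (F : ℕ → ℕ → M) :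
    ∑ i ∈ range N, ∑ j ∈ Ico (min i (μ i)) (μ i), F i j =
      ∑ d ∈ range (frobeniusRank μ), ∑ j ∈ Ico d (μ d), F d j := by
  have hrN : frobeniusRank μ ≤ N := by
    by_contra h
    have := (lt_frobeniusRank_iff hμ hN N).mp (by omega)
    simp [hN N le_rfl] at this
  rw [← sum_range_add_sum_Ico _ hrN, sum_eq_zero (s := Ico _ N) fun i hi => ?_, add_zero]
  · refine sum_congr rfl fun d hd => ?_
    rw [min_eq_left ((lt_frobeniusRank_iff hμ hN d).mp (mem_range.mp hd)).le]
  · have : μ i ≤ i := not_lt.mp fun h =>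
      (mem_Ico.mp hi).1.not_gt ((lt_frobeniusRank_iff hμ hN i).mpr h)
    rw [min_eq_right this, Ico_self, sum_empty]

lemma sum_row_heads_eq_sum_hook_legs (hμ : Antitone μ) (hN : ∀ i, N ≤ i → μ i = 0) (F : ℕ → ℕ → M) :
    ∑ i ∈ range N, ∑ j ∈ range (min i (μ i)), F i j =
      ∑ d ∈ range (frobeniusRank μ), ∑ i ∈ Ico (d + 1) (conjugatePart μ d), F i d := by
  refine sum_comm' fun i j => ?_
  have hconj := lt_conjugatePart_iff hμ hN i j
  have hrank := lt_frobeniusRank_iff hμ hN j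
  simp only [mem_range, mem_Ico, lt_min_iff]
  constructor
  · rintro ⟨hiN, hji, hjμ⟩
    have hμij := hμ hji.le
    omega
  · rintro ⟨⟨hji, hiμ⟩, hj⟩
    have : i < N := by
      by_contra h
      simp_all [hN i (not_lt.mp h)]
    omega

lemma sum_diagram_eq_sum_hooks (hμ : Antitone μ) (hN : ∀ i, N ≤ i → μ i = 0)
    (F : ℕ → ℕ → M) :
    ∑ i ∈ range N, ∑ j ∈ range (μ i), F i j =
      ∑ d ∈ range (frobeniusRank μ),
        (∑ j ∈ Ico d (μ d), F d j + ∑ i ∈ Ico (d + 1) (conjugatePart μ d), F i d) := by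
  have split_row (i : ℕ) : ∑ j ∈ range (μ i), F i j =
      ∑ j ∈ Ico (min i (μ i)) (μ i), F i j + ∑ j ∈ range (min i (μ i)), F i j := by
    rw [add_comm, sum_range_add_sum_Ico _ (min_le_right _ _)]
  rw [sum_congr rfl fun i _ => split_row i, sum_add_distrib, sum_row_tails_eq_sum_hook_arms hμ hN, sum_row_heads_eq_sum_hook_legs hμ hN,
    sum_add_distrib]

end Partition

open Complex

lemma exp_half_sub_mul_sum_Ico_exp (z c : ℂ) {a b : ℕ} (hab : a ≤ b) :
    (exp (z / 2) - exp (-z / 2)) * ∑ j ∈ Ico a b, exp (z * (j - c)) =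
      exp (z * (b - c - 1 / 2)) - exp (z * (a - c - 1 / 2)) := by
  rw [mul_sum, ← sum_Ico_sub (fun j : ℕ => exp (z * (j - c - 1 / 2))) hab]
  refine sum_congr rfl fun j _ => ?_
  rw [sub_mul, ← exp_add, ← exp_add]
  congr 2 <;> push_cast <;> ring

lemma exp_half_sub_mul_sum_Ico_exp_neg (z c : ℂ) {a b : ℕ} (hab : a ≤ b) :
    (exp (z / 2) - exp (-z / 2)) * ∑ j ∈ Ico a b, exp (z * (c - j)) =
      exp (-z * (a - c - 1 / 2)) - exp (-z * (b - c - 1 / 2)) := by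
  have telescope := sum_Ico_sub (fun j : ℕ => -exp (-z * (j - c - 1 / 2))) hab
  rw [neg_sub_neg] at telescope
  rw [mul_sum, ← telescope]
  refine sum_congr rfl fun j _ => ?_
  rw [sub_mul, ← exp_add, ← exp_add, neg_sub_neg]
  congr 2 <;> push_cast <;> ring

/-- For a partition `μ` with Frobenius coordinates
`(a_1,…,a_r | b_1,…,b_r)` (0-indexed: `a_j = μ j - j - 1`, `b_j = μ' j - j - 1`),
and any `z : ℂ`,
`(e^{z/2} - e^{-z/2}) Σ_{s∈μ} e^{z c(s)} = Σ_{j=1}^r (e^{z(a_j+1/2)} - e^{-z(b_j+1/2)})`.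
Here `a_j + 1/2 = μ j - j - 1/2` and `b_j + 1/2 = μ' j - j - 1/2` (0-indexed). -/
theorem stmt_2 (μ : ℕ → ℕ) (hμ : Antitone μ) (hfin : ∃ N, ∀ i, N ≤ i → μ i = 0)
    (z : ℂ) :
    (Complex.exp (z / 2) - Complex.exp (-z / 2)) *
        ∑' i : ℕ, ∑ j ∈ Finset.range (μ i), Complex.exp (z * ((j : ℂ) - (i : ℂ))) =
      ∑ j ∈ Finset.range (frobeniusRank μ),
        (Complex.exp (z * ((μ j : ℂ) - (j : ℂ) - 1 / 2)) -
          Complex.exp (-z * ((conjugatePart μ j : ℂ) - (j : ℂ) - 1 / 2))) := by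
  obtain ⟨N, hN⟩ := hfin
  rw [tsum_eq_sum (s := range N) fun i hi => by rw [hN i (by simpa using hi), sum_range_zero],
    sum_diagram_eq_sum_hooks hμ hN, mul_sum]
  refine sum_congr rfl fun d hd => ?_
  have hd_arm : d < μ d := (lt_frobeniusRank_iff hμ hN d).mp (mem_range.mp hd)
  have hd_leg : d < conjugatePart μ d := (lt_conjugatePart_iff hμ hN d d).mpr hd_arm
  rw [mul_add, exp_half_sub_mul_sum_Ico_exp z d hd_arm.le,
    exp_half_sub_mul_sum_Ico_exp_neg z d hd_leg]
  have corner : z * ((d : ℂ) - d - 1 / 2) = -z * (((d + 1 : ℕ) : ℂ) - d - 1 / 2) := by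
    push_cast; ring
  rw [corner]
  ring
end

section
/- Let n ≥ 1, let q ∈ (0,1) and z_1,…,z_n > 0 be real numbers with q·e^{z_1+⋯+z_n} < 1. Then all the following sums over partitions converge absolutely, and ∏_{j=1}^{n} ς(z_j) · ⟨ ch_{z_1} ⋯ ch_{z_n} ⟩_q = Σ_{S ⊆ {1,…,n}} (−1)^{n−|S|} · ⟨ ∏_{i∈S} W_{z_i} ⟩_q · ∏_{j∉S} ς(z_j)^{−1}, where ch_z(λ) = Σ_{s∈λ} e^{z·c(s)} and W_z(λ) = Σ_{i=1}^∞ e^{z(λ_i − i + 1/2)}. -/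
/-- A partition: a nonincreasing sequence of nonnegative integers (0-indexed)
with only finitely many nonzero terms. -/
structure IntPartition where
  parts : ℕ → ℕ
  antitone' : Antitone parts
  finite_support' : ∃ N, ∀ i, N ≤ i → parts i = 0

/-- The weight `|λ| = Σ_i λ_i` of a partition. -/
noncomputable def IntPartition.wt (lam : IntPartition) : ℕ := ∑' i : ℕ, lam.parts i

/-- `ς(z) = e^{z/2} - e^{-z/2}`. -/
noncomputable def varsigma (z : ℝ) : ℝ := Real.exp (z / 2) - Real.exp (-z / 2)

/-- `ch_z(λ) = Σ_{s∈λ} e^{z c(s)}`, the sum over the boxes of the Young diagram;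
boxes of (0-indexed) row `i` are `(i,j)` with `j < λ_i`, of content `j - i`. -/
noncomputable def chz (z : ℝ) (lam : IntPartition) : ℝ :=
  ∑' i : ℕ, ∑ j ∈ Finset.range (lam.parts i), Real.exp (z * ((j : ℝ) - (i : ℝ)))

/-- `W_z(λ) = Σ_{i=1}^∞ e^{z(λ_i - i + 1/2)}` (0-indexed: `λ_i - i + 1/2 ↦ λ_i - i - 1/2`). -/
noncomputable def Wz (z : ℝ) (lam : IntPartition) : ℝ :=
  ∑' i : ℕ, Real.exp (z * ((lam.parts i : ℝ) - (i : ℝ) - 1 / 2))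

/-- The Bloch–Okounkov `q`-bracket `⟨f⟩_q = (Σ_λ f(λ) q^{|λ|}) / (Σ_λ q^{|λ|})`. -/
noncomputable def qbracket (q : ℝ) (f : IntPartition → ℝ) : ℝ :=
  (∑' lam : IntPartition, f lam * q ^ lam.wt) / (∑' lam : IntPartition, q ^ lam.wt)

/-!
Row by row, `ς(z) · Σ_{j<λ_i} e^{z(j-i)}` telescopes to `e^{z(λ_i-i-1/2)} - e^{z(-i-1/2)}`, and the
tails `e^{z(-i-1/2)}` sum to `ς(z)⁻¹`. Hence `ς(z) ch_z = W_z - ς(z)⁻¹` on every partition, and the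
identity is the expansion of `∏_j (W_{z_j} - ς(z_j)⁻¹)`, summed against `q^{|λ|}`.

For convergence, `W_z(λ) ≤ ς(z)⁻¹ e^{z|λ|}` dominates every summand by a multiple of
`(q e^{z_1+⋯+z_n})^{|λ|}`. Finally `Σ_λ r^{|λ|} < ∞` for `0 ≤ r < 1`: the graph
`{(i, d_i) : d_i ≠ 0}` of the differences `d_i = λ_i - λ_{i+1}` determines `λ`, and since
`|λ| = Σ_i (i+1) d_i`, we get `r^{|λ|} ≤ ∏_{(i,d)} r^i r^d`, a summable family of finite products.
-/

namespace IntPartition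

noncomputable def bound (lam : IntPartition) : ℕ := lam.finite_support'.choose

lemma parts_eq_zero_of_bound_le (lam : IntPartition) {i : ℕ} (h : lam.bound ≤ i) :
    lam.parts i = 0 :=
  lam.finite_support'.choose_spec i h

lemma wt_eq_sum_range (lam : IntPartition) {N : ℕ} (hN : ∀ i, N ≤ i → lam.parts i = 0) :
    lam.wt = ∑ i ∈ Finset.range N, lam.parts i :=
  tsum_eq_sum fun i hi => hN i (by simpa using hi)

lemma parts_le_wt (lam : IntPartition) (i : ℕ) : lam.parts i ≤ lam.wt := by
  rw [lam.wt_eq_sum_range (N := max lam.bound (i + 1))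
    fun j hj => lam.parts_eq_zero_of_bound_le (le_of_max_le_left hj)]
  exact Finset.single_le_sum (fun j _ => Nat.zero_le _) (by simp)

def diff (lam : IntPartition) (i : ℕ) : ℕ := lam.parts i - lam.parts (i + 1)

lemma diff_add_parts_succ (lam : IntPartition) (i : ℕ) :
    lam.diff i + lam.parts (i + 1) = lam.parts i :=
  Nat.sub_add_cancel (lam.antitone' (Nat.le_succ i))

lemma parts_eq_sum_diff_add (lam : IntPartition) (i k : ℕ) :
    lam.parts i = ∑ j ∈ Finset.Ico i (i + k), lam.diff j + lam.parts (i + k) := by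
  induction k with
  | zero => simp
  | succ k ih =>
    rw [← add_assoc, Finset.sum_Ico_succ_top (by omega), add_assoc, diff_add_parts_succ, ih]

lemma wt_eq_sum_range_diff (lam : IntPartition) {N : ℕ} (hN : ∀ i, N ≤ i → lam.parts i = 0) :
    lam.wt = ∑ j ∈ Finset.range N, (j + 1) * lam.diff j := by
  have abel : ∀ M, ∑ i ∈ Finset.range M, lam.parts i
      = ∑ j ∈ Finset.range M, (j + 1) * lam.diff j + M * lam.parts M := by
    intro M
    induction M with
    | zero => simp
    | succ M ih =>
      rw [Finset.sum_range_succ, Finset.sum_range_succ, ih, ← lam.diff_add_parts_succ M]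
      ring
  rw [lam.wt_eq_sum_range hN, abel, hN N le_rfl, mul_zero, add_zero]

noncomputable def diffFinsupp (lam : IntPartition) : ℕ →₀ ℕ :=
  Finsupp.onFinset (Finset.range lam.bound) lam.diff fun i hi => by
    by_contra h
    have hi' : lam.bound ≤ i := by simpa using h
    exact hi (by simp [diff, lam.parts_eq_zero_of_bound_le hi',
      lam.parts_eq_zero_of_bound_le (hi'.trans (Nat.le_succ i))])

@[simp] lemma diffFinsupp_apply (lam : IntPartition) (i : ℕ) : lam.diffFinsupp i = lam.diff i :=
  rfl

lemma diffFinsupp_injective : Function.Injective diffFinsupp := by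
  intro lam mu h
  have hdiff : lam.diff = mu.diff := funext fun i => by simpa using DFunLike.congr_fun h i
  have hparts : lam.parts = mu.parts := funext fun i => by
    set N := max lam.bound mu.bound
    rw [lam.parts_eq_sum_diff_add i N, mu.parts_eq_sum_diff_add i N, hdiff,
      lam.parts_eq_zero_of_bound_le (by omega), mu.parts_eq_zero_of_bound_le (by omega)]
  cases lam
  cases mu
  simpa using hparts

lemma wt_eq_sum_support_diffFinsupp (lam : IntPartition) :
    lam.wt = ∑ j ∈ lam.diffFinsupp.support, (j + 1) * lam.diff j := by
  rw [lam.wt_eq_sum_range_diff fun i hi => lam.parts_eq_zero_of_bound_le hi]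
  refine (Finset.sum_subset Finsupp.support_onFinset_subset fun j _ hj => ?_).symm
  simpa using Finsupp.notMem_support_iff.1 hj

lemma pow_wt_le_prod_graph {r : ℝ} (hr0 : 0 ≤ r) (hr1 : r ≤ 1) (lam : IntPartition) :
    r ^ lam.wt ≤ ∏ p ∈ lam.diffFinsupp.graph, r ^ p.1 * r ^ p.2 := by
  simp only [Finsupp.graph, Finset.prod_map, Function.Embedding.coeFn_mk, diffFinsupp_apply]
  rw [wt_eq_sum_support_diffFinsupp, ← Finset.prod_pow_eq_pow_sum]
  refine Finset.prod_le_prod (fun _ _ => by positivity) fun j hj => ?_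
  have hd : lam.diff j ≠ 0 := by simpa using hj
  rw [← pow_add]
  exact pow_le_pow_of_le_one hr0 hr1 (by nlinarith [Nat.pos_of_ne_zero hd])

end IntPartition

open IntPartition

lemma summable_pow_wt {r : ℝ} (hr0 : 0 ≤ r) (hr1 : r < 1) :
    Summable fun lam : IntPartition => r ^ lam.wt := by
  have hgeom := summable_geometric_of_lt_one hr0 hr1
  have hpairs : Summable fun p : ℕ × ℕ => r ^ p.1 * r ^ p.2 :=
    hgeom.mul_of_nonneg hgeom (fun _ => by positivity) fun _ => by positivity
  have hgraphs := (summable_finsetProd_of_summable_nonneg (fun _ => by positivity) hpairs)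
    |>.comp_injective ((Finsupp.graph_injective ℕ ℕ).comp diffFinsupp_injective)
  exact hgraphs.of_nonneg_of_le (fun _ => by positivity) (pow_wt_le_prod_graph hr0 hr1.le)

lemma summable_prod_mul_pow_wt {ι : Type*} {s : Finset ι} {f : ι → IntPartition → ℝ}
    {K z : ι → ℝ} {q : ℝ} (hf0 : ∀ i ∈ s, ∀ lam, 0 ≤ f i lam)
    (hf : ∀ i ∈ s, ∀ lam, f i lam ≤ K i * Real.exp (z i * lam.wt)) (hq : 0 ≤ q)
    (hqz : q * Real.exp (∑ i ∈ s, z i) < 1) :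
    Summable fun lam => (∏ i ∈ s, f i lam) * q ^ lam.wt := by
  refine ((summable_pow_wt (by positivity) hqz).mul_left (∏ i ∈ s, K i)).of_nonneg_of_le
    (fun lam => mul_nonneg (Finset.prod_nonneg fun i hi => hf0 i hi lam) (by positivity))
    fun lam => ?_
  calc (∏ i ∈ s, f i lam) * q ^ lam.wt
      ≤ (∏ i ∈ s, K i * Real.exp (z i * lam.wt)) * q ^ lam.wt := by
        refine mul_le_mul_of_nonneg_right ?_ (by positivity)
        exact Finset.prod_le_prod (fun i hi => hf0 i hi lam) fun i hi => hf i hi lam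
    _ = (∏ i ∈ s, K i) * (q * Real.exp (∑ i ∈ s, z i)) ^ lam.wt := by
        rw [Finset.prod_mul_distrib, ← Real.exp_sum, ← Finset.sum_mul, mul_comm _ (lam.wt : ℝ),
          Real.exp_nat_mul, mul_pow]
        ring

lemma varsigma_pos {z : ℝ} (hz : 0 < z) : 0 < varsigma z :=
  sub_pos.2 (Real.exp_lt_exp.2 (by linarith))

lemma varsigma_mul_sum_range_exp (z : ℝ) (i k : ℕ) :
    varsigma z * ∑ j ∈ Finset.range k, Real.exp (z * ((j : ℝ) - i))
      = Real.exp (z * ((k : ℝ) - i - 1 / 2)) - Real.exp (z * (-(i : ℝ) - 1 / 2)) := by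
  rw [Finset.mul_sum]
  convert Finset.sum_range_sub (fun j : ℕ => Real.exp (z * ((j : ℝ) - i - 1 / 2))) k using 1
  · refine Finset.sum_congr rfl fun j _ => ?_
    rw [varsigma, sub_mul, ← Real.exp_add, ← Real.exp_add]
    push_cast
    ring_nf
  · simp

lemma hasSum_exp_neg_sub_half {z : ℝ} (hz : 0 < z) :
    HasSum (fun i : ℕ => Real.exp (z * (-(i : ℝ) - 1 / 2))) (varsigma z)⁻¹ := by
  have hlt : Real.exp (-z) < 1 := Real.exp_lt_one_iff.2 (by linarith)
  have hterms : (fun i : ℕ => Real.exp (z * (-(i : ℝ) - 1 / 2)))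
      = fun i => Real.exp (-z / 2) * Real.exp (-z) ^ i := funext fun i => by
    rw [← Real.exp_nat_mul, ← Real.exp_add]
    ring_nf
  have hsum : (varsigma z)⁻¹ = Real.exp (-z / 2) * (1 - Real.exp (-z))⁻¹ := by
    have hfac : varsigma z = Real.exp (z / 2) * (1 - Real.exp (-z)) := by
      rw [varsigma, mul_sub, mul_one, ← Real.exp_add]
      ring_nf
    rw [hfac, mul_inv, ← Real.exp_neg, neg_div]
  rw [hterms, hsum]
  exact (hasSum_geometric_of_lt_one (Real.exp_nonneg _) hlt).mul_left _

lemma hasSum_chz (z : ℝ) (lam : IntPartition) :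
    HasSum (fun i : ℕ => ∑ j ∈ Finset.range (lam.parts i), Real.exp (z * ((j : ℝ) - i)))
      (chz z lam) :=
  (summable_of_ne_finset_zero (s := Finset.range lam.bound) fun i hi => by
    rw [lam.parts_eq_zero_of_bound_le (by simpa using hi), Finset.sum_range_zero]).hasSum

lemma chz_nonneg (z : ℝ) (lam : IntPartition) : 0 ≤ chz z lam :=
  tsum_nonneg fun _ => Finset.sum_nonneg fun _ _ => (Real.exp_pos _).le

lemma hasSum_Wz {z : ℝ} (hz : 0 < z) (lam : IntPartition) :
    HasSum (fun i : ℕ => Real.exp (z * ((lam.parts i : ℝ) - i - 1 / 2)))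
      (varsigma z * chz z lam + (varsigma z)⁻¹) := by
  have hrows := ((hasSum_chz z lam).mul_left (varsigma z)).add (hasSum_exp_neg_sub_half hz)
  simpa only [varsigma_mul_sum_range_exp, sub_add_cancel] using hrows

lemma Wz_eq {z : ℝ} (hz : 0 < z) (lam : IntPartition) :
    Wz z lam = varsigma z * chz z lam + (varsigma z)⁻¹ :=
  (hasSum_Wz hz lam).tsum_eq

lemma Wz_nonneg (z : ℝ) (lam : IntPartition) : 0 ≤ Wz z lam :=
  tsum_nonneg fun _ => (Real.exp_pos _).le

lemma Wz_le {z : ℝ} (hz : 0 < z) (lam : IntPartition) :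
    Wz z lam ≤ (varsigma z)⁻¹ * Real.exp (z * lam.wt) := by
  rw [Wz_eq hz]
  refine hasSum_le (fun i => ?_) (hasSum_Wz hz lam)
    ((hasSum_exp_neg_sub_half hz).mul_right (Real.exp (z * lam.wt)))
  rw [← Real.exp_add, Real.exp_le_exp]
  have hpart : (lam.parts i : ℝ) ≤ lam.wt := by exact_mod_cast lam.parts_le_wt i
  nlinarith

lemma chz_le {z : ℝ} (hz : 0 < z) (lam : IntPartition) :
    chz z lam ≤ (varsigma z ^ 2)⁻¹ * Real.exp (z * lam.wt) := by
  have hς := varsigma_pos hz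
  have hW := Wz_le hz lam
  rw [Wz_eq hz lam] at hW
  rw [← mul_le_mul_iff_of_pos_left hς]
  calc varsigma z * chz z lam ≤ (varsigma z)⁻¹ * Real.exp (z * lam.wt) := by
        linarith [inv_pos.2 hς]
    _ = varsigma z * ((varsigma z ^ 2)⁻¹ * Real.exp (z * lam.wt)) := by
        field_simp

lemma prod_varsigma_mul_chz {ι : Type*} [Fintype ι] [DecidableEq ι] {z : ι → ℝ}
    (hz : ∀ i, 0 < z i) (lam : IntPartition) :
    ∏ i, varsigma (z i) * chz (z i) lam
      = ∑ S : Finset ι, (-1 : ℝ) ^ Sᶜ.card * (∏ i ∈ S, Wz (z i) lam) *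
          ∏ i ∈ Sᶜ, (varsigma (z i))⁻¹ := by
  have hsplit : ∀ i, varsigma (z i) * chz (z i) lam = Wz (z i) lam + -(varsigma (z i))⁻¹ :=
    fun i => by rw [Wz_eq (hz i)]; ring
  simp only [hsplit, Finset.prod_add, Finset.powerset_univ, ← Finset.compl_eq_univ_sdiff,
    Finset.prod_neg]
  exact Finset.sum_congr rfl fun S _ => by ring

lemma prod_varsigma_mul_tsum_prod_chz {ι : Type*} [Fintype ι] [DecidableEq ι] {z : ι → ℝ}
    (hz : ∀ i, 0 < z i) {q : ℝ}
    (hW : ∀ S : Finset ι, Summable fun lam => (∏ i ∈ S, Wz (z i) lam) * q ^ lam.wt) :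
    (∏ i, varsigma (z i)) * ∑' lam, (∏ i, chz (z i) lam) * q ^ lam.wt
      = ∑ S : Finset ι, (-1 : ℝ) ^ Sᶜ.card * (∏ i ∈ Sᶜ, (varsigma (z i))⁻¹) *
          ∑' lam, (∏ i ∈ S, Wz (z i) lam) * q ^ lam.wt := by
  simp only [← tsum_mul_left]
  rw [← Summable.tsum_finsetSum fun S _ => (hW S).mul_left _]
  refine tsum_congr fun lam => ?_
  rw [← mul_assoc, ← Finset.prod_mul_distrib, prod_varsigma_mul_chz hz, Finset.sum_mul]
  exact Finset.sum_congr rfl fun S _ => by ring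

theorem stmt_8_general (n : ℕ) (q : ℝ) (hq0 : 0 < q)
    (z : Fin n → ℝ) (hz : ∀ j, 0 < z j)
    (hqz : q * Real.exp (∑ j, z j) < 1) :
    Summable (fun lam : IntPartition => q ^ lam.wt) ∧
    Summable (fun lam : IntPartition =>
      (∏ j : Fin n, chz (z j) lam) * q ^ lam.wt) ∧
    (∀ S : Finset (Fin n),
      Summable (fun lam : IntPartition => (∏ i ∈ S, Wz (z i) lam) * q ^ lam.wt)) ∧
    (∏ j : Fin n, varsigma (z j)) * qbracket q (fun lam => ∏ j : Fin n, chz (z j) lam) =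
      ∑ S : Finset (Fin n),
        (-1 : ℝ) ^ (n - S.card) *
          qbracket q (fun lam => ∏ i ∈ S, Wz (z i) lam) *
          ∏ j ∈ Sᶜ, (varsigma (z j))⁻¹ := by
  have hqS : ∀ S : Finset (Fin n), q * Real.exp (∑ i ∈ S, z i) < 1 := fun S => calc
    q * Real.exp (∑ i ∈ S, z i) ≤ q * Real.exp (∑ i, z i) := by
      refine mul_le_mul_of_nonneg_left (Real.exp_le_exp.2 ?_) hq0.le
      exact Finset.sum_le_sum_of_subset_of_nonneg (Finset.subset_univ S) fun i _ _ => (hz i).le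
    _ < 1 := hqz
  have hq1 : q < 1 := by simpa using hqS ∅
  have hW : ∀ S : Finset (Fin n),
      Summable fun lam : IntPartition => (∏ i ∈ S, Wz (z i) lam) * q ^ lam.wt := fun S =>
    summable_prod_mul_pow_wt (fun i _ => Wz_nonneg (z i)) (fun i _ => Wz_le (hz i)) hq0.le (hqS S)
  refine ⟨summable_pow_wt hq0.le hq1,
    summable_prod_mul_pow_wt (fun i _ => chz_nonneg (z i)) (fun i _ => chz_le (hz i)) hq0.le hqz,
    hW, ?_⟩
  rw [qbracket, mul_div_assoc', prod_varsigma_mul_tsum_prod_chz hz hW, Finset.sum_div]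
  refine Finset.sum_congr rfl fun S _ => ?_
  rw [qbracket, Finset.card_compl, Fintype.card_fin]
  ring

/-- For `n ≥ 1`, `q ∈ (0,1)`, `z_1,…,z_n > 0` with
`q e^{z_1+⋯+z_n} < 1`, all the sums over partitions converge absolutely and
`∏_j ς(z_j) · ⟨ch_{z_1} ⋯ ch_{z_n}⟩_q
  = Σ_{S ⊆ {1,…,n}} (-1)^{n-|S|} ⟨∏_{i∈S} W_{z_i}⟩_q ∏_{j∉S} ς(z_j)⁻¹`. -/
theorem stmt_8 (n : ℕ) (hn : 1 ≤ n) (q : ℝ) (hq0 : 0 < q) (hq1 : q < 1)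
    (z : Fin n → ℝ) (hz : ∀ j, 0 < z j)
    (hqz : q * Real.exp (∑ j, z j) < 1) :
    Summable (fun lam : IntPartition => q ^ lam.wt) ∧
    Summable (fun lam : IntPartition =>
      (∏ j : Fin n, chz (z j) lam) * q ^ lam.wt) ∧
    (∀ S : Finset (Fin n),
      Summable (fun lam : IntPartition => (∏ i ∈ S, Wz (z i) lam) * q ^ lam.wt)) ∧
    (∏ j : Fin n, varsigma (z j)) * qbracket q (fun lam => ∏ j : Fin n, chz (z j) lam) =
      ∑ S : Finset (Fin n),
        (-1 : ℝ) ^ (n - S.card) *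
          qbracket q (fun lam => ∏ i ∈ S, Wz (z i) lam) *
          ∏ j ∈ Sᶜ, (varsigma (z j))⁻¹ :=
  stmt_8_general n q hq0 z hz hqz
end

section
/- (Deformed Bloch–Okounkov one-point function) Let v, q, t be complex numbers with |v| < 1, |q| < 1 and |t| < 1. Then all series and products below converge absolutely and Σ_{λ∈𝒫} v^{|λ|} · (1/(1−q)) Σ_{i=1}^∞ t^{i−1} q^{λ_i} = ( ∏_{i≥0} (1 − q t v^{i+1}) ) / ( ∏_{i≥0} (1 − q v^i)(1 − t v^i) ). -/
open Filter Topology Finset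

section InfiniteProducts

variable {ι 𝕜 : Type*} [NormedField 𝕜]

lemma norm_mul_pow_lt_one {a v : 𝕜} (ha : ‖a‖ < 1) (hv : ‖v‖ ≤ 1) (n : ℕ) :
    ‖a * v ^ n‖ < 1 := by
  rw [norm_mul, norm_pow]
  exact mul_lt_one_of_nonneg_of_lt_one_left (norm_nonneg a) ha (pow_le_one₀ (norm_nonneg v) hv)

lemma summable_norm_mul_pow (c : 𝕜) {v : 𝕜} (hv : ‖v‖ < 1) :
    Summable fun i : ℕ => ‖c * v ^ i‖ := by
  simpa [norm_mul, norm_pow] using (summable_geometric_of_lt_one (norm_nonneg v) hv).mul_left ‖c‖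

variable [CompleteSpace 𝕜]

lemma multipliable_one_sub_of_summable {w : ι → 𝕜} (hw : Summable (‖w ·‖)) :
    Multipliable fun j => 1 - w j := by
  simpa [sub_eq_add_neg] using
    multipliable_one_add_of_summable (f := fun j => -w j) (by simpa using hw)

lemma tprod_one_sub_ne_zero {w : ι → 𝕜} (hw1 : ∀ j, w j ≠ 1) (hw : Summable (‖w ·‖)) :
    ∏' j, (1 - w j) ≠ 0 := by
  simpa [sub_eq_add_neg] using tprod_one_add_ne_zero_of_summable (f := fun j => -w j)
    (fun j => by simpa [← sub_eq_add_neg, sub_eq_zero] using (hw1 j).symm) (by simpa using hw)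

lemma tendsto_prod_range_one_sub_inv {w : ℕ → 𝕜} (hw1 : ∀ j, w j ≠ 1)
    (hw : Summable (‖w ·‖)) :
    Tendsto (fun N => (∏ j ∈ range N, (1 - w j))⁻¹) atTop (𝓝 (∏' j, (1 - w j))⁻¹) :=
  (multipliable_one_sub_of_summable hw).hasProd.tendsto_prod_nat.inv₀
    (tprod_one_sub_ne_zero hw1 hw)

lemma prod_range_mul_tprod_one_sub {w : ℕ → 𝕜} (hw : Summable (‖w ·‖)) (k : ℕ) :
    (∏ j ∈ range k, (1 - w j)) * ∏' j, (1 - w (j + k)) = ∏' j, (1 - w j) :=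
  Multipliable.prod_mul_tprod_nat_mul' (f := fun j => 1 - w j)
    (multipliable_one_sub_of_summable (w := fun j => w (j + k)) ((summable_nat_add_iff k).2 hw))

end InfiniteProducts

section Multiplicities

variable {𝕜 : Type*} [NormedField 𝕜]

def supportBelow (N : ℕ) : Set (ℕ →₀ ℕ) := {d | ∀ j ∈ d.support, j < N}

lemma eventually_mem_supportBelow (d : ℕ →₀ ℕ) : ∀ᶠ N in atTop, d ∈ supportBelow N :=
  eventually_atTop.2 ⟨d.support.sup id + 1, fun _ hN j hj => by
    have : j ≤ d.support.sup id := le_sup (f := id) hj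
    omega⟩

lemma supportBelow_zero : supportBelow 0 = {0} := by
  ext d
  simp [supportBelow, Finsupp.ext_iff, Finsupp.mem_support_iff]

noncomputable def supportBelowSuccEquiv (N : ℕ) : supportBelow N × ℕ ≃ supportBelow (N + 1) where
  toFun p := ⟨p.1.1 + Finsupp.single N p.2, fun j hj => by
    rcases Finset.mem_union.1 (Finsupp.support_add hj) with h | h
    · exact Nat.lt_succ_of_lt (p.1.2 j h)
    · rw [Finset.mem_singleton.1 (Finsupp.support_single_subset h)]
      exact N.lt_succ_self⟩
  invFun d := (⟨d.1.erase N, fun j hj => by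
    rw [Finsupp.support_erase, Finset.mem_erase] at hj
    exact lt_of_le_of_ne (Nat.le_of_lt_succ (d.2 j hj.2)) hj.1⟩, d.1 N)
  left_inv p := by
    have hpN : p.1.1 N = 0 := Finsupp.notMem_support_iff.1 fun h => lt_irrefl N (p.1.2 N h)
    ext j
    · by_cases h : j = N
      · subst h; simp [hpN]
      · simp [Finsupp.erase_ne h]
    · simp [hpN]
  right_inv d := Subtype.ext (Finsupp.erase_add_single N d.1)

lemma norm_finsuppProd_pow (w : ℕ → 𝕜) (d : ℕ →₀ ℕ) :
    ‖d.prod (w · ^ ·)‖ = d.prod (‖w ·‖ ^ ·) := by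
  simp [Finsupp.prod, norm_prod, norm_pow]

lemma hasSum_finsuppProd_pow_supportBelow [CompleteSpace 𝕜] {w : ℕ → 𝕜} (hw : ∀ j, ‖w j‖ < 1)
    (N : ℕ) :
    Summable (fun d : supportBelow N => ‖d.1.prod (w · ^ ·)‖) ∧
      HasSum (fun d : supportBelow N => d.1.prod (w · ^ ·)) (∏ j ∈ range N, (1 - w j))⁻¹ := by
  induction N with
  | zero =>
    rw [supportBelow_zero]
    refine ⟨(hasSum_singleton 0 fun d : ℕ →₀ ℕ => ‖d.prod (w · ^ ·)‖).summable, ?_⟩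
    convert hasSum_singleton 0 fun d : ℕ →₀ ℕ => d.prod (w · ^ ·) using 1
    · rfl
    · simp
  | succ N ih =>
    obtain ⟨hnorm, hsum⟩ := ih
    let e := supportBelowSuccEquiv N
    have he : ∀ p, (e p).1.prod (w · ^ ·) = p.1.1.prod (w · ^ ·) * w N ^ p.2 := fun p => by
      simp [e, supportBelowSuccEquiv, Finsupp.prod_add_index' (h := fun j n => w j ^ n)
        (fun _ => pow_zero _) (fun _ _ _ => pow_add _ _ _)]
    have hgeom : Summable fun n : ℕ => ‖w N ^ n‖ := by
      simpa [norm_pow] using summable_geometric_of_lt_one (norm_nonneg _) (hw N)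
    have hprod := hnorm.mul_of_nonneg hgeom (fun _ => norm_nonneg _) (fun _ => norm_nonneg _)
    rw [← e.summable_iff, ← e.hasSum_iff]
    simp only [Function.comp_def, he, norm_mul]
    refine ⟨hprod, ?_⟩
    rw [prod_range_succ, mul_inv]
    exact hsum.mul (hasSum_geometric_of_norm_lt_one (hw N))
      (Summable.of_norm (by simpa [norm_mul] using hprod))

lemma hasSum_indicator_supportBelow [CompleteSpace 𝕜] {w : ℕ → 𝕜} (hw : ∀ j, ‖w j‖ < 1)
    (N : ℕ) :
    HasSum ((supportBelow N).indicator fun d : ℕ →₀ ℕ => d.prod (w · ^ ·))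
      (∏ j ∈ range N, (1 - w j))⁻¹ :=
  (hasSum_subtype_iff_indicator (f := fun d : ℕ →₀ ℕ => d.prod (w · ^ ·))).1
    (hasSum_finsuppProd_pow_supportBelow hw N).2

lemma summable_norm_finsuppProd_pow {w : ℕ → 𝕜} (hw1 : ∀ j, ‖w j‖ < 1)
    (hw : Summable (‖w ·‖)) : Summable fun d : ℕ →₀ ℕ => ‖d.prod (w · ^ ·)‖ := by
  set a : ℕ → ℝ := (‖w ·‖)
  have ha1 : ∀ j, ‖a j‖ < 1 := fun j => by simpa [a] using hw1 j
  obtain ⟨C, hC⟩ := (tendsto_prod_range_one_sub_inv (w := a) (fun j => (hw1 j).ne)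
    (by simpa [a] using hw)).bddAbove_range
  refine summable_of_sum_le (c := C) (fun d => norm_nonneg _) fun u => ?_
  obtain ⟨N, hN⟩ := ((eventually_all_finset u).2 fun d _ => eventually_mem_supportBelow d).exists
  calc ∑ d ∈ u, ‖d.prod (w · ^ ·)‖
      = ∑ d ∈ u, (supportBelow N).indicator (fun d => d.prod (a · ^ ·)) d :=
        sum_congr rfl fun d hd => by rw [Set.indicator_of_mem (hN d hd), norm_finsuppProd_pow]
    _ ≤ (∏ j ∈ range N, (1 - a j))⁻¹ :=
        sum_le_hasSum u (fun d _ => Set.indicator_nonneg (fun d _ => by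
          rw [← norm_finsuppProd_pow]; positivity) d) (hasSum_indicator_supportBelow ha1 N)
    _ ≤ C := hC ⟨N, rfl⟩

theorem hasSum_finsuppProd_pow [CompleteSpace 𝕜] {w : ℕ → 𝕜} (hw1 : ∀ j, ‖w j‖ < 1)
    (hw : Summable (‖w ·‖)) :
    HasSum (fun d : ℕ →₀ ℕ => d.prod (w · ^ ·)) (∏' j, (1 - w j))⁻¹ := by
  have hw1' : ∀ j, w j ≠ 1 := fun j h => by simpa [h] using hw1 j
  have hnorm := summable_norm_finsuppProd_pow hw1 hw
  have hlim : Tendsto (fun N => ∑' d, (supportBelow N).indicator (fun d => d.prod (w · ^ ·)) d)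
      atTop (𝓝 (∑' d : ℕ →₀ ℕ, d.prod (w · ^ ·))) :=
    tendsto_tsum_of_dominated_convergence hnorm
      (fun d => tendsto_const_nhds.congr' <| (eventually_mem_supportBelow d).mono
        fun N hN => (Set.indicator_of_mem hN _).symm)
      (Eventually.of_forall fun N d => norm_indicator_le_norm_self _ _)
  simp only [fun N => (hasSum_indicator_supportBelow hw1 N).tsum_eq] at hlim
  rw [tendsto_nhds_unique (tendsto_prod_range_one_sub_inv hw1' hw) hlim]
  exact hnorm.of_norm.hasSum

end Multiplicities

section QBinomial

variable {𝕜 : Type*} [NormedField 𝕜] [CompleteSpace 𝕜] {c : ℕ → 𝕜} {C : ℝ} {v q t : 𝕜}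

lemma summable_mul_pow_of_norm_le (hc : ∀ i, ‖c i‖ ≤ C) (ht : ‖t‖ < 1) :
    Summable fun i => c i * t ^ i :=
  .of_norm_bounded ((summable_geometric_of_lt_one (norm_nonneg t) ht).mul_left C) fun i => by
    rw [norm_mul, norm_pow]
    exact mul_le_mul_of_nonneg_right (hc i) (by positivity)

lemma tsum_mul_pow_functional_eq (hv : ‖v‖ < 1) (hc : ∀ i, ‖c i‖ ≤ C)
    (hrec : ∀ i, c (i + 1) * (1 - v ^ (i + 1)) = c i * (1 - q * v ^ (i + 1))) (ht : ‖t‖ < 1) :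
    (∑' i, c i * t ^ i) * (1 - t) = (∑' i, c i * (v * t) ^ i) * (1 - q * v * t) := by
  have hvt : ‖v * t‖ < 1 := by
    rw [norm_mul]; exact mul_lt_one_of_nonneg_of_lt_one_left (norm_nonneg v) hv ht.le
  have hs := summable_mul_pow_of_norm_le hc ht
  have hs' := summable_mul_pow_of_norm_le hc hvt
  have key : ∑' i, (c i * t ^ i - c i * (v * t) ^ i) =
      ∑' i, (t * (c i * t ^ i) - q * v * t * (c i * (v * t) ^ i)) := by
    -- the `i = 0` term vanishes, and `hrec` rewrites the shifted terms
    rw [(hs.sub hs').tsum_eq_zero_add]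
    simp only [pow_zero, sub_self, zero_add]
    exact tsum_congr fun i => by linear_combination t ^ (i + 1) * hrec i
  rw [hs.tsum_sub hs', (hs.mul_left t).tsum_sub (hs'.mul_left _), hs.tsum_mul_left,
    hs'.tsum_mul_left] at key
  linear_combination key

lemma tsum_mul_pow_mul_prod_range (hv : ‖v‖ < 1) (hc : ∀ i, ‖c i‖ ≤ C)
    (hrec : ∀ i, c (i + 1) * (1 - v ^ (i + 1)) = c i * (1 - q * v ^ (i + 1))) (ht : ‖t‖ < 1)
    (N : ℕ) :
    (∑' i, c i * t ^ i) * ∏ j ∈ range N, (1 - t * v ^ j) =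
      (∑' i, c i * (v ^ N * t) ^ i) * ∏ j ∈ range N, (1 - q * t * v ^ (j + 1)) := by
  induction N with
  | zero => simp
  | succ N ih =>
    have hvNt : ‖v ^ N * t‖ < 1 := mul_comm t (v ^ N) ▸ norm_mul_pow_lt_one ht hv.le N
    have := tsum_mul_pow_functional_eq hv hc hrec hvNt
    rw [prod_range_succ, prod_range_succ, ← mul_assoc, ih, pow_succ', mul_assoc v]
    linear_combination (∏ j ∈ range N, (1 - q * t * v ^ (j + 1))) * this

lemma tendsto_tsum_mul_pow_mul_pow (hv : ‖v‖ < 1) (hc : ∀ i, ‖c i‖ ≤ C) (ht : ‖t‖ < 1) :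
    Tendsto (fun N => ∑' i, c i * (v ^ N * t) ^ i) atTop (𝓝 (c 0)) := by
  have hlim : Tendsto (fun N => ∑' i, c i * (v ^ N * t) ^ i) atTop (𝓝 (∑' i, c i * 0 ^ i)) := by
    refine tendsto_tsum_of_dominated_convergence
      ((summable_geometric_of_lt_one (norm_nonneg t) ht).mul_left C) (fun i => ?_)
      (Eventually.of_forall fun N i => ?_)
    · exact ((((tendsto_pow_atTop_nhds_zero_of_norm_lt_one hv).mul_const t).pow i).const_mul
        (c i)).congr' (Eventually.of_forall fun N => by simp) |>.trans (by simp)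
    · rw [norm_mul, norm_pow, norm_mul, norm_pow]
      refine mul_le_mul (hc i) (pow_le_pow_left₀ (by positivity) ?_ i) (by positivity)
        ((norm_nonneg _).trans (hc i))
      exact mul_le_of_le_one_left (norm_nonneg t) (pow_le_one₀ (norm_nonneg v) hv.le)
  rwa [tsum_eq_single 0 fun i hi => by simp [zero_pow hi], pow_zero, mul_one] at hlim

/-- Cauchy's `q`-binomial theorem (with base `v`), for any bounded solution `c` of the
recursion satisfied by `(q v; v)_i / (v; v)_i`. -/
theorem tsum_mul_pow_mul_tprod (hv : ‖v‖ < 1) (hc : ∀ i, ‖c i‖ ≤ C)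
    (hrec : ∀ i, c (i + 1) * (1 - v ^ (i + 1)) = c i * (1 - q * v ^ (i + 1))) (ht : ‖t‖ < 1) :
    (∑' i, c i * t ^ i) * ∏' j, (1 - t * v ^ j) = c 0 * ∏' j, (1 - q * t * v ^ (j + 1)) := by
  have hmul : ∀ a : 𝕜, Tendsto (fun N => ∏ j ∈ range N, (1 - a * v ^ j)) atTop
      (𝓝 (∏' j, (1 - a * v ^ j))) := fun a =>
    (multipliable_one_sub_of_summable (summable_norm_mul_pow a hv)).hasProd.tendsto_prod_nat
  have hL := (hmul t).const_mul (∑' i, c i * t ^ i)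
  have hR := (tendsto_tsum_mul_pow_mul_pow hv hc ht).mul (hmul (q * t * v))
  have hshift : ∀ j : ℕ, q * t * v * v ^ j = q * t * v ^ (j + 1) := fun j => by ring
  simp only [hshift] at hR
  exact tendsto_nhds_unique (hL.congr fun N => tsum_mul_pow_mul_prod_range hv hc hrec ht N) hR

end QBinomial

lemma eq_of_forall_eq_add_succ {f g a : ℕ → ℕ} {N : ℕ} (hf : ∀ i, f i = a i + f (i + 1))
    (hg : ∀ i, g i = a i + g (i + 1)) (hfN : ∀ i, N ≤ i → f i = 0)
    (hgN : ∀ i, N ≤ i → g i = 0) : f = g := by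
  funext i
  induction h : N - i generalizing i with
  | zero => rw [hfN i (by omega), hgN i (by omega)]
  | succ k ih => rw [hf, hg, ih (i + 1) (by omega)]

namespace IntPartition

lemma ext_parts {a b : IntPartition} (h : a.parts = b.parts) : a = b := by
  cases a; cases b; cases h; rfl

/-- The partition with `d j` columns of height `j + 1`. -/
def ofColumns (d : ℕ →₀ ℕ) : IntPartition where
  parts i := ∑ j ∈ d.support with i ≤ j, d j
  antitone' a b hab := sum_le_sum_of_subset fun j hj => by
    simp only [mem_filter] at hj ⊢
    exact ⟨hj.1, hab.trans hj.2⟩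
  finite_support' := ⟨d.support.sup id + 1, fun i hi => sum_eq_zero fun j hj => by
    have h1 : j ≤ d.support.sup id := le_sup (f := id) (mem_filter.1 hj).1
    have h2 := (mem_filter.1 hj).2
    omega⟩

lemma ofColumns_parts (d : ℕ →₀ ℕ) (i : ℕ) :
    (ofColumns d).parts i = ∑ j ∈ d.support with i ≤ j, d j := rfl

lemma ofColumns_parts_eq_add (d : ℕ →₀ ℕ) (i : ℕ) :
    (ofColumns d).parts i = d i + (ofColumns d).parts (i + 1) := by
  rw [ofColumns_parts, ofColumns_parts, sum_filter, sum_filter]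
  by_cases hi : i ∈ d.support
  · rw [← add_sum_erase _ _ hi, ← add_sum_erase _ _ hi, if_pos le_rfl, if_neg (by omega),
      zero_add]
    congr 1
    exact sum_congr rfl fun j hj => if_congr (by have := ne_of_mem_erase hj; omega) rfl rfl
  · rw [Finsupp.notMem_support_iff.1 hi, zero_add]
    exact sum_congr rfl fun j hj =>
      if_congr (by have : j ≠ i := fun h => hi (h ▸ hj); omega) rfl rfl

lemma ofColumns_wt (d : ℕ →₀ ℕ) : (ofColumns d).wt = d.sum fun j n => (j + 1) * n := by
  have hcol : ∀ j, HasSum (fun i => if i ≤ j then d j else 0) ((j + 1) * d j) := fun j => by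
    have h : HasSum (fun i => if i ≤ j then d j else 0)
        (∑ i ∈ range (j + 1), if i ≤ j then d j else 0) :=
      hasSum_sum_of_ne_finset_zero fun i hi => if_neg (by simpa [Nat.lt_succ_iff] using hi)
    rwa [sum_ite_of_true fun i hi => Nat.lt_succ_iff.1 (mem_range.1 hi), sum_const, card_range,
      smul_eq_mul] at h
  simp only [IntPartition.wt, ofColumns_parts, sum_filter]
  rw [Summable.tsum_finsetSum fun j _ => (hcol j).summable]
  exact sum_congr rfl fun j _ => (hcol j).tsum_eq

lemma ofColumns_injective : Function.Injective ofColumns := fun d d' h => by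
  ext j
  have h1 := ofColumns_parts_eq_add d j
  have h2 := ofColumns_parts_eq_add d' j
  rw [h] at h1
  omega

lemma ofColumns_surjective : Function.Surjective ofColumns := fun lam => by
  obtain ⟨N, hN⟩ := lam.finite_support'
  have hsupp : (Function.support fun j => lam.parts j - lam.parts (j + 1)).Finite :=
    (Set.finite_Iio N).subset fun j hj => by
      by_contra h
      rw [Set.mem_Iio, not_lt] at h
      exact hj (by simp [hN j h, hN (j + 1) (by omega)])
  let d := Finsupp.ofSupportFinite _ hsupp
  have hd : ∀ j, d j = lam.parts j - lam.parts (j + 1) := fun j => rfl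
  refine ⟨d, ext_parts (eq_of_forall_eq_add_succ (a := d) (N := N) (ofColumns_parts_eq_add d)
    (fun i => ?_) (fun i hi => sum_eq_zero fun j hj => ?_) hN)⟩
  · have := lam.antitone' (by omega : i ≤ i + 1)
    rw [hd]; omega
  · have := (mem_filter.1 hj).2
    simp [hd, hN j (by omega), hN (j + 1) (by omega)]

noncomputable def columnsEquiv : (ℕ →₀ ℕ) ≃ IntPartition :=
  .ofBijective ofColumns ⟨ofColumns_injective, ofColumns_surjective⟩

@[simp]
lemma columnsEquiv_apply (d : ℕ →₀ ℕ) : columnsEquiv d = ofColumns d := rfl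

section Series

variable {𝕜 : Type*} [NormedField 𝕜] {v q t : 𝕜}

/-- A column of height `j + 1` adds `j + 1` to `|λ|`, and adds `1` to `λ_i` iff `i ≤ j`. -/
def columnWeight (v q : 𝕜) (i j : ℕ) : 𝕜 := (if i ≤ j then q else 1) * v ^ (j + 1)

lemma pow_wt_mul_pow_parts (v q : 𝕜) (d : ℕ →₀ ℕ) (i : ℕ) :
    v ^ (ofColumns d).wt * q ^ (ofColumns d).parts i = d.prod (columnWeight v q i · ^ ·) := by
  simp only [columnWeight, ofColumns_wt, ofColumns_parts, Finsupp.prod, Finsupp.sum, mul_pow,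
    prod_mul_distrib, ← pow_mul, ← prod_pow_eq_pow_sum, ite_pow, one_pow, prod_ite,
    prod_const_one, mul_one]
  rw [mul_comm]

lemma norm_columnWeight_le (hq : ‖q‖ ≤ 1) (i j : ℕ) :
    ‖columnWeight v q i j‖ ≤ ‖v‖ ^ (j + 1) := by
  rw [columnWeight, norm_mul, norm_pow]
  refine mul_le_of_le_one_left (by positivity) ?_
  split_ifs <;> simp [hq]

lemma norm_columnWeight_lt_one (hv : ‖v‖ < 1) (hq : ‖q‖ ≤ 1) (i j : ℕ) :
    ‖columnWeight v q i j‖ < 1 :=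
  (norm_columnWeight_le hq i j).trans_lt (pow_lt_one₀ (norm_nonneg v) hv (by omega))

lemma summable_norm_columnWeight (hv : ‖v‖ < 1) (hq : ‖q‖ ≤ 1) (i : ℕ) :
    Summable fun j => ‖columnWeight v q i j‖ :=
  .of_nonneg_of_le (fun _ => norm_nonneg _) (norm_columnWeight_le hq i)
    ((summable_geometric_of_lt_one (norm_nonneg v) hv).comp_injective (add_left_injective 1))

lemma summable_norm_pow_wt_mul_pow_parts (hv : ‖v‖ < 1) (hq : ‖q‖ ≤ 1) (i : ℕ) :
    Summable fun lam : IntPartition => ‖v ^ lam.wt * q ^ lam.parts i‖ := by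
  rw [← columnsEquiv.summable_iff]
  simpa only [Function.comp_def, columnsEquiv_apply, pow_wt_mul_pow_parts] using
    summable_norm_finsuppProd_pow (w := columnWeight v q i) (norm_columnWeight_lt_one hv hq i)
      (summable_norm_columnWeight hv hq i)

lemma summable_norm_pow_wt (hv : ‖v‖ < 1) : Summable fun lam : IntPartition => ‖v‖ ^ lam.wt := by
  simpa using summable_norm_pow_wt_mul_pow_parts hv norm_one.le 0

lemma norm_tsum_pow_wt_mul_pow_parts_le (hv : ‖v‖ < 1) (hq : ‖q‖ ≤ 1) (i : ℕ) :
    ‖∑' lam : IntPartition, v ^ lam.wt * q ^ lam.parts i‖ ≤ ∑' lam : IntPartition, ‖v‖ ^ lam.wt :=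
  (norm_tsum_le_tsum_norm (summable_norm_pow_wt_mul_pow_parts hv hq i)).trans <|
    (summable_norm_pow_wt_mul_pow_parts hv hq i).tsum_le_tsum (fun lam => by
      rw [norm_mul, norm_pow, norm_pow]
      exact mul_le_of_le_one_right (by positivity) (pow_le_one₀ (norm_nonneg q) hq))
      (summable_norm_pow_wt hv)

variable [CompleteSpace 𝕜]

lemma summable_pow_mul_pow_parts (hq : ‖q‖ ≤ 1) (ht : ‖t‖ < 1) (lam : IntPartition) :
    Summable fun i : ℕ => t ^ i * q ^ lam.parts i :=
  .of_norm_bounded (summable_geometric_of_lt_one (norm_nonneg t) ht) fun i => by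
    rw [norm_mul, norm_pow, norm_pow]
    exact mul_le_of_le_one_right (by positivity) (pow_le_one₀ (norm_nonneg q) hq)

lemma hasSum_pow_wt_mul_pow_parts (hv : ‖v‖ < 1) (hq : ‖q‖ ≤ 1) (i : ℕ) :
    HasSum (fun lam : IntPartition => v ^ lam.wt * q ^ lam.parts i)
      (∏' j, (1 - columnWeight v q i j))⁻¹ := by
  rw [← columnsEquiv.hasSum_iff]
  simpa only [Function.comp_def, columnsEquiv_apply, pow_wt_mul_pow_parts] using
    hasSum_finsuppProd_pow (w := columnWeight v q i) (norm_columnWeight_lt_one hv hq i)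
      (summable_norm_columnWeight hv hq i)

lemma tprod_one_sub_columnWeight_ne_zero (hv : ‖v‖ < 1) (hq : ‖q‖ ≤ 1) (i : ℕ) :
    ∏' j, (1 - columnWeight v q i j) ≠ 0 :=
  tprod_one_sub_ne_zero (fun j h => by simpa [h] using norm_columnWeight_lt_one hv hq i j)
    (summable_norm_columnWeight hv hq i)

lemma tprod_one_sub_columnWeight_mul (hv : ‖v‖ < 1) (hq : ‖q‖ ≤ 1) (i : ℕ) :
    (∏' j, (1 - columnWeight v q i j)) * (1 - v ^ (i + 1)) =
      (∏' j, (1 - columnWeight v q (i + 1) j)) * (1 - q * v ^ (i + 1)) := by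
  have hhead : ∀ j ∈ range i, 1 - columnWeight v q i j = 1 - columnWeight v q (i + 1) j :=
    fun j hj => by
      simp only [mem_range] at hj
      simp only [columnWeight, if_neg (show ¬i ≤ j by omega), if_neg (show ¬i + 1 ≤ j by omega)]
  have htail : ∀ j, 1 - columnWeight v q i (j + (i + 1)) =
      1 - columnWeight v q (i + 1) (j + (i + 1)) := fun j => by
    simp only [columnWeight, if_pos (show i ≤ j + (i + 1) by omega),
      if_pos (show i + 1 ≤ j + (i + 1) by omega)]
  rw [← prod_range_mul_tprod_one_sub (summable_norm_columnWeight hv hq i) (i + 1),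
    ← prod_range_mul_tprod_one_sub (summable_norm_columnWeight hv hq (i + 1)) (i + 1),
    prod_range_succ, prod_range_succ, prod_congr rfl hhead, tprod_congr htail]
  simp only [columnWeight, le_refl, if_true, Nat.not_succ_le_self, if_false, one_mul]
  ring

lemma tsum_pow_wt_mul_pow_parts_succ (hv : ‖v‖ < 1) (hq : ‖q‖ ≤ 1) (i : ℕ) :
    (∑' lam : IntPartition, v ^ lam.wt * q ^ lam.parts (i + 1)) * (1 - v ^ (i + 1)) =
      (∑' lam : IntPartition, v ^ lam.wt * q ^ lam.parts i) * (1 - q * v ^ (i + 1)) := by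
  rw [(hasSum_pow_wt_mul_pow_parts hv hq (i + 1)).tsum_eq,
    (hasSum_pow_wt_mul_pow_parts hv hq i).tsum_eq]
  have h := tprod_one_sub_columnWeight_mul hv hq i
  have h1 := tprod_one_sub_columnWeight_ne_zero hv hq i
  have h2 := tprod_one_sub_columnWeight_ne_zero hv hq (i + 1)
  generalize ∏' j, (1 - columnWeight v q i j) = P at h h1 ⊢
  generalize ∏' j, (1 - columnWeight v q (i + 1) j) = P' at h h2 ⊢
  field_simp
  linear_combination h

lemma tsum_pow_wt_mul_pow_parts_zero_mul_tprod (hv : ‖v‖ < 1) (hq : ‖q‖ ≤ 1) :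
    (∑' lam : IntPartition, v ^ lam.wt * q ^ lam.parts 0) * ∏' j, (1 - q * v ^ j) = 1 - q := by
  have hP := tprod_one_sub_columnWeight_ne_zero hv hq 0
  simp only [columnWeight, Nat.zero_le, if_true] at hP
  rw [(hasSum_pow_wt_mul_pow_parts hv hq 0).tsum_eq,
    ← prod_range_mul_tprod_one_sub (w := fun j => q * v ^ j) (summable_norm_mul_pow q hv) 1]
  simp only [columnWeight, Nat.zero_le, if_true, prod_range_one, pow_zero, mul_one]
  field_simp

lemma summable_pow_wt_mul_pow_mul_pow_parts (hv : ‖v‖ < 1) (hq : ‖q‖ ≤ 1) (ht : ‖t‖ < 1) :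
    Summable fun p : IntPartition × ℕ => v ^ p.1.wt * (t ^ p.2 * q ^ p.1.parts p.2) :=
  .of_norm_bounded ((summable_norm_pow_wt hv).mul_of_nonneg
      (summable_geometric_of_lt_one (norm_nonneg t) ht) (fun _ => by positivity)
      (fun _ => by positivity)) fun p => by
    rw [norm_mul, norm_mul, norm_pow, norm_pow, norm_pow]
    exact mul_le_mul_of_nonneg_left
      (mul_le_of_le_one_right (by positivity) (pow_le_one₀ (norm_nonneg q) hq)) (by positivity)

lemma tsum_pow_wt_mul_tsum (hv : ‖v‖ < 1) (hq : ‖q‖ ≤ 1) (ht : ‖t‖ < 1) :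
    ∑' lam : IntPartition, v ^ lam.wt * ∑' i : ℕ, t ^ i * q ^ lam.parts i =
      ∑' i : ℕ, (∑' lam : IntPartition, v ^ lam.wt * q ^ lam.parts i) * t ^ i := by
  calc ∑' lam : IntPartition, v ^ lam.wt * ∑' i : ℕ, t ^ i * q ^ lam.parts i
      = ∑' (lam : IntPartition) (i : ℕ), v ^ lam.wt * (t ^ i * q ^ lam.parts i) :=
        tsum_congr fun lam => tsum_mul_left.symm
    _ = ∑' (i : ℕ) (lam : IntPartition), v ^ lam.wt * (t ^ i * q ^ lam.parts i) :=
        (Summable.tsum_comm (f := fun (lam : IntPartition) (i : ℕ) =>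
          v ^ lam.wt * (t ^ i * q ^ lam.parts i))
          (summable_pow_wt_mul_pow_mul_pow_parts hv hq ht)).symm
    _ = _ := tsum_congr fun i => by
        rw [← tsum_mul_right]
        exact tsum_congr fun lam => by ring

end Series

end IntPartition

/-- deformed Bloch–Okounkov one-point function.  For complex
`v, q, t` with `|v| < 1`, `|q| < 1`, `|t| < 1`, all series and products below
converge absolutely and
`Σ_{λ∈𝒫} v^{|λ|} (1/(1-q)) Σ_{i=1}^∞ t^{i-1} q^{λ_i}
  = (∏_{i≥0}(1 - q t v^{i+1})) / (∏_{i≥0}(1 - q v^i)(1 - t v^i))`.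
In the 0-indexed convention the inner sum is `Σ_{i≥0} t^i q^{λ_i}`. -/
theorem stmt_12 (v q t : ℂ) (hv : ‖v‖ < 1) (hq : ‖q‖ < 1)
    (ht : ‖t‖ < 1) :
    (∀ lam : IntPartition, Summable fun i : ℕ => t ^ i * q ^ lam.parts i) ∧
    Summable (fun lam : IntPartition =>
      v ^ lam.wt * ((1 - q)⁻¹ * ∑' i : ℕ, t ^ i * q ^ lam.parts i)) ∧
    Multipliable (fun i : ℕ => 1 - q * t * v ^ (i + 1)) ∧
    Multipliable (fun i : ℕ => 1 - q * v ^ i) ∧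
    Multipliable (fun i : ℕ => 1 - t * v ^ i) ∧
    ∑' lam : IntPartition,
        v ^ lam.wt * ((1 - q)⁻¹ * ∑' i : ℕ, t ^ i * q ^ lam.parts i) =
      (∏' i : ℕ, (1 - q * t * v ^ (i + 1))) /
        ((∏' i : ℕ, (1 - q * v ^ i)) * ∏' i : ℕ, (1 - t * v ^ i)) := by
  have hq1 : ‖q‖ ≤ 1 := hq.le
  let c : ℕ → ℂ := fun i => ∑' lam : IntPartition, v ^ lam.wt * q ^ lam.parts i
  have hqbin : (∑' i, c i * t ^ i) * ∏' j, (1 - t * v ^ j) =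
      c 0 * ∏' j, (1 - q * t * v ^ (j + 1)) :=
    tsum_mul_pow_mul_tprod hv (IntPartition.norm_tsum_pow_wt_mul_pow_parts_le hv hq1)
      (IntPartition.tsum_pow_wt_mul_pow_parts_succ hv hq1) ht
  have hc0 : c 0 * ∏' j, (1 - q * v ^ j) = 1 - q :=
    IntPartition.tsum_pow_wt_mul_pow_parts_zero_mul_tprod hv hq1
  have hS : ∑' lam : IntPartition, v ^ lam.wt * ((1 - q)⁻¹ * ∑' i : ℕ, t ^ i * q ^ lam.parts i) =
      (1 - q)⁻¹ * ∑' i, c i * t ^ i := by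
    simp_rw [mul_left_comm _ (1 - q)⁻¹, tsum_mul_left, IntPartition.tsum_pow_wt_mul_tsum hv hq1 ht]
    rfl
  have h1q : 1 - q ≠ 0 := sub_ne_zero.2 fun h => by simp [← h] at hq
  have hB : ∏' j, (1 - q * v ^ j) ≠ 0 := right_ne_zero_of_mul (hc0 ▸ h1q)
  have hD : ∏' j, (1 - t * v ^ j) ≠ 0 := tprod_one_sub_ne_zero (w := fun j => t * v ^ j)
    (fun j h => by simpa [h] using norm_mul_pow_lt_one ht hv.le j) (summable_norm_mul_pow t hv)
  refine ⟨IntPartition.summable_pow_mul_pow_parts hq1 ht, ?_, multipliable_one_sub_of_summable ?_,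
    multipliable_one_sub_of_summable (summable_norm_mul_pow q hv),
    multipliable_one_sub_of_summable (summable_norm_mul_pow t hv), ?_⟩
  · simpa [mul_left_comm _ (1 - q)⁻¹, tsum_mul_left] using
      (IntPartition.summable_pow_wt_mul_pow_mul_pow_parts hv hq1 ht).prod.mul_left (1 - q)⁻¹
  · simpa only [pow_succ', ← mul_assoc] using summable_norm_mul_pow (q * t * v) hv
  · rw [hS, eq_div_iff (mul_ne_zero hB hD)]
    field_simp
    linear_combination (∏' j, (1 - q * v ^ j)) * hqbin + (∏' i, (1 - q * t * v ^ (i + 1))) * hc0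
end
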